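/- arXiv:math-ph/0506044 — 3 statements merged into one kernel-verified Lean document; each statement's English description precedes it below -/
import Mathlib

section
/- Let λ, μ ∈ ℝ, let k ∈ ℕ, let X, a_0, …, a_k : ℝ → ℝ be smooth, and let b_0, …, b_k : ℝ → ℝ be smooth functions such that Σ_{i=0}^{k} b_i·φ^{(i)} = L_X^μ( Σ_{i=0}^{k} a_i·φ^{(i)} ) − Σ_{i=0}^{k} a_i·(L_X^λ φ)^{(i)} for every smooth φ : ℝ → ℝ. Then for every smooth φ : ℝ → ℝ, Σ_{i=0}^{k} (−1)^i·(b_i·φ)^{(i)} = L_X^{1−λ}( Σ_{i=0}^{k} (−1)^i·(a_i·φ)^{(i)} ) − Σ_{i=0}^{k} (−1)^i·( a_i·(L_X^{1−μ} φ) )^{(i)}. (That is, the conjugation map C(A) = Σ (−1)^i (d/dx)^i ∘ a_i intertwines the actions: C(𝓛_X^{λ,μ}(A)) = 𝓛_X^{1−μ,1−λ}(C(A)); in particular C is an equivariant symmetry of the module of operators whenever λ + μ = 1.) -/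
open Finset

/-- Lie derivative of a `lam`-density `φ` along the vector field `X`:
`L_X^lam φ = X·φ' + lam·X'·φ`. -/
noncomputable def lieDeriv (lam : ℝ) (X φ : ℝ → ℝ) : ℝ → ℝ :=
  fun x => X x * deriv φ x + lam * deriv X x * φ x

noncomputable section

abbrev Sm (f : ℝ → ℝ) : Prop := ContDiff ℝ (⊤ : ℕ∞) f

lemma Sm.itd {f : ℝ → ℝ} (hf : Sm f) (n : ℕ) : Sm (iteratedDeriv n f) := by
  rw [iteratedDeriv_eq_iterate]; exact hf.iterate_deriv n

lemma Sm.dAt {f : ℝ → ℝ} (hf : Sm f) (x : ℝ) : DifferentiableAt ℝ f x :=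
  (hf.differentiable (by simp)).differentiableAt

lemma Sm.deriv' {f : ℝ → ℝ} (hf : Sm f) : Sm (deriv f) :=
  (contDiff_infty_iff_deriv.mp hf).2

lemma itd_add {f g : ℝ → ℝ} (hf : Sm f) (hg : Sm g) (n : ℕ) :
    iteratedDeriv n (fun x => f x + g x) = fun x => iteratedDeriv n f x + iteratedDeriv n g x := by
  funext x
  rw [← iteratedDerivWithin_univ, ← iteratedDerivWithin_univ, ← iteratedDerivWithin_univ]
  exact iteratedDerivWithin_add (Set.mem_univ x) uniqueDiffOn_univ
    (hf.of_le (by exact_mod_cast le_top)).contDiffWithinAt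
    (hg.of_le (by exact_mod_cast le_top)).contDiffWithinAt

lemma Sm.zero : Sm (fun _ : ℝ => (0:ℝ)) := contDiff_const

lemma itd_zero (n : ℕ) : iteratedDeriv n (fun _ : ℝ => (0:ℝ)) = fun _ => 0 := by
  induction n with
  | zero => rw [iteratedDeriv_zero]
  | succ n ih =>
    rw [iteratedDeriv_succ, ih]
    funext x
    exact deriv_const x 0

lemma Sm.sum {ι : Type*} {s : Finset ι} {F : ι → ℝ → ℝ} (hF : ∀ i ∈ s, Sm (F i)) :
    Sm (fun x => ∑ i ∈ s, F i x) := by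
  classical
  induction s using Finset.induction with
  | empty => simpa using Sm.zero
  | @insert c s' hx ih =>
    simp only [Finset.sum_insert hx]
    exact (hF c (mem_insert_self c s')).add (ih fun i hi => hF i (mem_insert_of_mem hi))

lemma itd_sum {ι : Type*} (n : ℕ) {s : Finset ι} {F : ι → ℝ → ℝ} (hF : ∀ i ∈ s, Sm (F i)) :
    iteratedDeriv n (fun x => ∑ i ∈ s, F i x) = fun x => ∑ i ∈ s, iteratedDeriv n (F i) x := by
  classical
  induction s using Finset.induction with
  | empty => simpa using itd_zero n
  | @insert c s' hx ih =>
    simp only [Finset.sum_insert hx]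
    rw [itd_add (hF c (mem_insert_self c s')) (Sm.sum fun i hi => hF i (mem_insert_of_mem hi)),
      ih fun i hi => hF i (mem_insert_of_mem hi)]

lemma itd_mul {f g : ℝ → ℝ} (hf : Sm f) (hg : Sm g) (n : ℕ) :
    iteratedDeriv n (fun x => f x * g x)
      = fun x => ∑ j ∈ range (n+1),
          (n.choose j : ℝ) * iteratedDeriv j f x * iteratedDeriv (n-j) g x := by
  induction n with
  | zero => simp
  | succ n ih =>
    rw [iteratedDeriv_succ, ih]
    funext x
    have hdA : ∀ j, DifferentiableAt ℝ
        (fun x => (n.choose j : ℝ) * iteratedDeriv j f x * iteratedDeriv (n-j) g x) x := by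
      intro j
      exact (((hf.itd j).dAt x).const_mul _).mul ((hg.itd (n-j)).dAt x)
    rw [deriv_fun_sum fun j _ => hdA j]
    have step : ∀ j ∈ range (n+1),
        deriv (fun x => (n.choose j : ℝ) * iteratedDeriv j f x * iteratedDeriv (n-j) g x) x
          = (n.choose j : ℝ) * (iteratedDeriv (j+1) f x * iteratedDeriv (n-j) g x
              + iteratedDeriv j f x * iteratedDeriv (n-j+1) g x) := by
      intro j _
      rw [show (fun x => (n.choose j : ℝ) * iteratedDeriv j f x * iteratedDeriv (n-j) g x)
          = fun x => (n.choose j : ℝ) * (iteratedDeriv j f x * iteratedDeriv (n-j) g x) by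
          funext y; ring]
      rw [deriv_const_mul (d := fun y => iteratedDeriv j f y * iteratedDeriv (n-j) g y) _ (((hf.itd j).dAt x).mul ((hg.itd (n-j)).dAt x)),
        deriv_fun_mul ((hf.itd j).dAt x) ((hg.itd (n-j)).dAt x)]
      rw [← iteratedDeriv_succ, ← iteratedDeriv_succ]
    rw [Finset.sum_congr rfl step]
    -- now a combinatorial rearrangement
    have expand : ∑ j ∈ range (n+1), (n.choose j : ℝ) *
          (iteratedDeriv (j+1) f x * iteratedDeriv (n-j) g x
            + iteratedDeriv j f x * iteratedDeriv (n-j+1) g x)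
        = (∑ j ∈ range (n+1), (n.choose j : ℝ) *
            (iteratedDeriv (j+1) f x * iteratedDeriv (n+1-(j+1)) g x))
          + ∑ j ∈ range (n+1), (n.choose j : ℝ) *
            (iteratedDeriv j f x * iteratedDeriv (n+1-j) g x) := by
      rw [← Finset.sum_add_distrib]
      refine Finset.sum_congr rfl fun j hj => ?_
      have hj' : j ≤ n := Nat.lt_succ_iff.mp (mem_range.mp hj)
      have h1 : n + 1 - (j+1) = n - j := by omega
      have h2 : n - j + 1 = n + 1 - j := by omega
      rw [h1, h2]; ring
    rw [expand]
    have rhs : ∑ j ∈ range (n+2), ((n+1).choose j : ℝ) *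
          iteratedDeriv j f x * iteratedDeriv (n+1-j) g x
        = (∑ j ∈ range (n+1), (n.choose j : ℝ) *
            (iteratedDeriv (j+1) f x * iteratedDeriv (n+1-(j+1)) g x))
          + ∑ j ∈ range (n+1), (n.choose j : ℝ) *
            (iteratedDeriv j f x * iteratedDeriv (n+1-j) g x) := by
      rw [Finset.sum_range_succ' (fun j => ((n+1).choose j : ℝ) *
          iteratedDeriv j f x * iteratedDeriv (n+1-j) g x) (n+1)]
      have pascal : ∀ j ∈ range (n+1), ((n+1).choose (j+1) : ℝ) *
            iteratedDeriv (j+1) f x * iteratedDeriv (n+1-(j+1)) g x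
          = (n.choose j : ℝ) * (iteratedDeriv (j+1) f x * iteratedDeriv (n+1-(j+1)) g x)
            + (n.choose (j+1) : ℝ) * (iteratedDeriv (j+1) f x * iteratedDeriv (n+1-(j+1)) g x) := by
        intro j _
        rw [Nat.choose_succ_succ]
        push_cast; ring
      rw [Finset.sum_congr rfl pascal, Finset.sum_add_distrib]
      have e1 : ∑ j ∈ range (n+2), (n.choose j : ℝ) *
            (iteratedDeriv j f x * iteratedDeriv (n+1-j) g x)
          = ∑ j ∈ range (n+1), (n.choose (j+1) : ℝ) *
              (iteratedDeriv (j+1) f x * iteratedDeriv (n+1-(j+1)) g x)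
            + (n.choose 0 : ℝ) * (iteratedDeriv 0 f x * iteratedDeriv (n+1-0) g x) :=
        Finset.sum_range_succ' (fun j => (n.choose j : ℝ) *
          (iteratedDeriv j f x * iteratedDeriv (n+1-j) g x)) (n+1)
      have e2 : ∑ j ∈ range (n+2), (n.choose j : ℝ) *
            (iteratedDeriv j f x * iteratedDeriv (n+1-j) g x)
          = ∑ j ∈ range (n+1), (n.choose j : ℝ) *
              (iteratedDeriv j f x * iteratedDeriv (n+1-j) g x) := by
        rw [Finset.sum_range_succ]
        simp [Nat.choose_succ_self]
      simp only [iteratedDeriv_zero, Nat.cast_one, one_mul, Nat.choose_zero_right] at e1 e2 ⊢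
      linarith [e1, e2]
    rw [rhs]


/-- action of operator Σ cᵢ ∂ⁱ -/
def opApp (n : ℕ) (c : ℕ → ℝ → ℝ) (φ : ℝ → ℝ) : ℝ → ℝ :=
  fun x => ∑ i ∈ range (n+1), c i x * iteratedDeriv i φ x

/-- action of conjugate operator Σ (−1)ⁱ ∂ⁱ ∘ cᵢ -/
def conjApp (n : ℕ) (c : ℕ → ℝ → ℝ) (φ : ℝ → ℝ) : ℝ → ℝ :=
  fun x => ∑ i ∈ range (n+1), (-1:ℝ)^i * iteratedDeriv i (fun y => c i y * φ y) x

/-- coefficients of L_X^ν ∘ (Σ cᵢ ∂ⁱ) -/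
def post (ν : ℝ) (X : ℝ → ℝ) (c : ℕ → ℝ → ℝ) : ℕ → ℝ → ℝ :=
  fun i x => (if i = 0 then 0 else X x * c (i-1) x) + X x * deriv (c i) x
    + ν * deriv X x * c i x

/-- coefficients of the conjugate operator in normal form -/
def conjCoeff (n : ℕ) (c : ℕ → ℝ → ℝ) : ℕ → ℝ → ℝ :=
  fun j x => ∑ i ∈ range (n+1), (-1:ℝ)^i * (i.choose j : ℝ) * iteratedDeriv (i - j) (c i) x

lemma itd_centered_pow (m : ℕ) (c : ℝ) (i : ℕ) :
    iteratedDeriv i (fun y : ℝ => (y - c)^m)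
      = fun x => (m.descFactorial i : ℝ) * (x - c)^(m - i) := by
  induction i with
  | zero => funext x; simp
  | succ i ih =>
    rw [iteratedDeriv_succ, ih]
    funext x
    have hd : HasDerivAt (fun x : ℝ => (x - c)^(m - i))
        ((m - i : ℕ) * (x - c)^(m - i - 1) * 1) x :=
      (((hasDerivAt_id x).sub_const c).pow (m - i))
    rw [deriv_const_mul _ hd.differentiableAt, hd.deriv]
    have : m - i - 1 = m - (i+1) := by omega
    rw [this, Nat.descFactorial_succ]
    push_cast
    ring

lemma itd_centered_pow_self (m i : ℕ) (c : ℝ) :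
    iteratedDeriv i (fun y : ℝ => (y - c)^m) c
      = if i = m then (m.factorial : ℝ) else 0 := by
  rw [itd_centered_pow]
  rcases lt_trichotomy i m with h | h | h
  · rw [if_neg (by omega)]
    simp [zero_pow (show m - i ≠ 0 by omega)]
  · subst h
    simp [Nat.descFactorial_self]
  · rw [if_neg (by omega), Nat.descFactorial_eq_zero_iff_lt.mpr h]
    simp

lemma opApp_inj {n : ℕ} {c d : ℕ → ℝ → ℝ}
    (h : ∀ φ : ℝ → ℝ, ContDiff ℝ (⊤ : ℕ∞) φ → ∀ x, opApp n c φ x = opApp n d φ x) :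
    ∀ i, i ≤ n → c i = d i := by
  intro m hm
  funext x0
  have hφ : ContDiff ℝ (⊤ : ℕ∞) (fun y : ℝ => (y - x0)^m) :=
    (contDiff_id.sub contDiff_const).pow m
  have key := h _ hφ x0
  unfold opApp at key
  have ev : ∀ e : ℕ → ℝ → ℝ,
      ∑ i ∈ range (n+1), e i x0 * iteratedDeriv i (fun y : ℝ => (y - x0)^m) x0
        = e m x0 * (m.factorial : ℝ) := by
    intro e
    rw [Finset.sum_eq_single m]
    · rw [itd_centered_pow_self, if_pos rfl]
    · intro i _ hne
      rw [itd_centered_pow_self, if_neg hne, mul_zero]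
    · intro hmem
      exact absurd (mem_range.mpr (Nat.lt_succ_of_le hm)) hmem
  rw [ev c, ev d] at key
  have : (m.factorial : ℝ) ≠ 0 := Nat.cast_ne_zero.mpr (Nat.factorial_ne_zero m)
  exact mul_right_cancel₀ this key


def Pad (n : ℕ) (c : ℕ → ℝ → ℝ) : Prop := ∀ i, n < i → c i = fun _ => 0

lemma itd_sub {f g : ℝ → ℝ} (hf : Sm f) (hg : Sm g) (n : ℕ) :
    iteratedDeriv n (fun x => f x - g x) = fun x => iteratedDeriv n f x - iteratedDeriv n g x := by
  funext x
  rw [← iteratedDerivWithin_univ, ← iteratedDerivWithin_univ, ← iteratedDerivWithin_univ]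
  exact iteratedDerivWithin_sub (Set.mem_univ x) uniqueDiffOn_univ
    (hf.of_le (by exact_mod_cast le_top)).contDiffWithinAt
    (hg.of_le (by exact_mod_cast le_top)).contDiffWithinAt

lemma itd_const_mul {f : ℝ → ℝ} (hf : Sm f) (A : ℝ) (n : ℕ) :
    iteratedDeriv n (fun x => A * f x) = fun x => A * iteratedDeriv n f x := by
  funext x
  rw [← iteratedDerivWithin_univ, ← iteratedDerivWithin_univ]
  exact iteratedDerivWithin_const_mul (Set.mem_univ x) uniqueDiffOn_univ A
    (hf.of_le (by exact_mod_cast le_top)).contDiffWithinAt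

lemma itd_neg' {f : ℝ → ℝ} (n : ℕ) :
    iteratedDeriv n (fun x => -(f x)) = fun x => -(iteratedDeriv n f x) :=
  funext fun x => iteratedDeriv_neg n f x

lemma itd_itd (f : ℝ → ℝ) (p q : ℕ) :
    iteratedDeriv p (iteratedDeriv q f) = iteratedDeriv (p + q) f := by
  funext x
  simp only [iteratedDeriv_eq_iterate, ← Function.iterate_add_apply]

lemma Sm.lie {X φ : ℝ → ℝ} (hX : Sm X) (hφ : Sm φ) (ν : ℝ) : Sm (lieDeriv ν X φ) :=
  (hX.mul hφ.deriv').add ((contDiff_const.mul hX.deriv').mul hφ)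

lemma sm_postA {X : ℝ → ℝ} {c : ℕ → ℝ → ℝ} (hX : Sm X) (hc : ∀ i, Sm (c i)) (i : ℕ) :
    Sm (fun x => if i = 0 then (0:ℝ) else X x * c (i-1) x) := by
  by_cases h : i = 0
  · simp only [h, if_pos]; exact Sm.zero
  · simp only [if_neg h]; exact hX.mul (hc (i-1))

lemma sm_post {X : ℝ → ℝ} {c : ℕ → ℝ → ℝ} (hX : Sm X) (hc : ∀ i, Sm (c i)) (ν : ℝ) (i : ℕ) :
    Sm (post ν X c i) := by
  unfold post
  exact ((sm_postA hX hc i).add (hX.mul (hc i).deriv')).add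
    ((contDiff_const.mul hX.deriv').mul (hc i))

lemma sm_conjCoeff {c : ℕ → ℝ → ℝ} (hc : ∀ i, Sm (c i)) (n j : ℕ) :
    Sm (conjCoeff n c j) := by
  unfold conjCoeff
  exact Sm.sum fun i _ => contDiff_const.mul ((hc i).itd (i - j))

lemma pad_conjCoeff {c : ℕ → ℝ → ℝ} (n : ℕ) : Pad n (conjCoeff n c) := by
  intro j hj
  funext x
  unfold conjCoeff
  refine Finset.sum_eq_zero fun i hi => ?_
  have : i.choose j = 0 := Nat.choose_eq_zero_of_lt (by
    have := mem_range.mp hi; omega)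
  rw [this]; simp

lemma pad_post {X : ℝ → ℝ} {c : ℕ → ℝ → ℝ} (hpad : Pad n c) (ν : ℝ) :
    Pad (n+1) (post ν X c) := by
  intro i hi
  funext x
  unfold post
  rw [if_neg (by omega), hpad i (by omega), hpad (i-1) (by omega)]
  simp

lemma opApp_post {n : ℕ} {ν : ℝ} {X : ℝ → ℝ} {c : ℕ → ℝ → ℝ} {φ : ℝ → ℝ}
    (hX : Sm X) (hc : ∀ i, Sm (c i)) (hpad : Pad n c) (hφ : Sm φ) :
    ∀ x, opApp (n+1) (post ν X c) φ x = lieDeriv ν X (opApp n c φ) x := by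
  intro x
  have hderiv : deriv (opApp n c φ) x
      = ∑ i ∈ range (n+1), (deriv (c i) x * iteratedDeriv i φ x
          + c i x * iteratedDeriv (i+1) φ x) := by
    unfold opApp
    rw [deriv_fun_sum (A := fun i y => c i y * iteratedDeriv i φ y) fun i _ => ((hc i).dAt x).mul ((hφ.itd i).dAt x)]
    refine Finset.sum_congr rfl fun i _ => ?_
    rw [deriv_fun_mul ((hc i).dAt x) ((hφ.itd i).dAt x), ← iteratedDeriv_succ]
  unfold lieDeriv
  rw [hderiv]
  unfold opApp post
  rw [show ∑ i ∈ range (n+1+1),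
        ((if i = 0 then (0:ℝ) else X x * c (i-1) x) + X x * deriv (c i) x
          + ν * deriv X x * c i x) * iteratedDeriv i φ x
      = ∑ i ∈ range (n+2), (if i = 0 then (0:ℝ) else X x * c (i-1) x) * iteratedDeriv i φ x
        + (∑ i ∈ range (n+2), X x * deriv (c i) x * iteratedDeriv i φ x
          + ∑ i ∈ range (n+2), ν * deriv X x * c i x * iteratedDeriv i φ x) by
    rw [← Finset.sum_add_distrib, ← Finset.sum_add_distrib]
    exact Finset.sum_congr rfl fun i _ => by ring]
  have s1 : ∑ i ∈ range (n+2), (if i = 0 then (0:ℝ) else X x * c (i-1) x)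
        * iteratedDeriv i φ x
      = ∑ i ∈ range (n+1), X x * c i x * iteratedDeriv (i+1) φ x := by
    rw [Finset.sum_range_succ' (fun i => (if i = 0 then (0:ℝ) else X x * c (i-1) x)
        * iteratedDeriv i φ x) (n+1)]
    simp
  have s2 : ∑ i ∈ range (n+2), X x * deriv (c i) x * iteratedDeriv i φ x
      = ∑ i ∈ range (n+1), X x * deriv (c i) x * iteratedDeriv i φ x := by
    rw [Finset.sum_range_succ, hpad (n+1) (by omega)]
    simp
  have s3 : ∑ i ∈ range (n+2), ν * deriv X x * c i x * iteratedDeriv i φ x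
      = ∑ i ∈ range (n+1), ν * deriv X x * c i x * iteratedDeriv i φ x := by
    rw [Finset.sum_range_succ, hpad (n+1) (by omega)]
    simp
  rw [s1, s2, s3, Finset.mul_sum, Finset.mul_sum]
  rw [show ∑ i ∈ range (n+1), X x * (deriv (c i) x * iteratedDeriv i φ x
      + c i x * iteratedDeriv (i+1) φ x)
    = ∑ i ∈ range (n+1), (X x * c i x * iteratedDeriv (i+1) φ x
      + X x * deriv (c i) x * iteratedDeriv i φ x) from
    Finset.sum_congr rfl fun i _ => by ring]
  rw [Finset.sum_add_distrib]
  rw [show ∑ i ∈ range (n+1), ν * deriv X x * (c i x * iteratedDeriv i φ x)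
    = ∑ i ∈ range (n+1), ν * deriv X x * c i x * iteratedDeriv i φ x from
    Finset.sum_congr rfl fun i _ => by ring]
  ring

lemma conjApp_post {n : ℕ} {ν : ℝ} {X : ℝ → ℝ} {c : ℕ → ℝ → ℝ} {φ : ℝ → ℝ}
    (hX : Sm X) (hc : ∀ i, Sm (c i)) (hpad : Pad n c) (hφ : Sm φ) :
    ∀ x, conjApp (n+1) (post ν X c) φ x
      = -(conjApp n c (lieDeriv (1-ν) X φ) x) := by
  intro x
  unfold conjApp
  have hsplit : ∀ i ∈ range (n+2), (-1:ℝ)^i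
        * iteratedDeriv i (fun y => post ν X c i y * φ y) x
      = (-1:ℝ)^i * iteratedDeriv i
          (fun y => (if i = 0 then (0:ℝ) else X y * c (i-1) y) * φ y) x
        + (-1:ℝ)^i * iteratedDeriv i
          (fun y => (X y * deriv (c i) y + ν * deriv X y * c i y) * φ y) x := by
    intro i _
    have e : (fun y => post ν X c i y * φ y)
        = fun y => ((if i = 0 then (0:ℝ) else X y * c (i-1) y) * φ y)
          + ((X y * deriv (c i) y + ν * deriv X y * c i y) * φ y) := by
      funext y; unfold post; ring
    rw [e, itd_add ((sm_postA hX hc i).mul hφ)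
      (((hX.mul (hc i).deriv').add ((contDiff_const.mul hX.deriv').mul (hc i))).mul hφ)]
    ring
  rw [Finset.sum_congr rfl hsplit, Finset.sum_add_distrib]
  have sA : ∑ i ∈ range (n+2), (-1:ℝ)^i * iteratedDeriv i
        (fun y => (if i = 0 then (0:ℝ) else X y * c (i-1) y) * φ y) x
      = ∑ i ∈ range (n+1), (-1:ℝ)^(i+1) * iteratedDeriv (i+1)
          (fun y => X y * c i y * φ y) x := by
    rw [Finset.sum_range_succ' (fun i => (-1:ℝ)^i * iteratedDeriv i
        (fun y => (if i = 0 then (0:ℝ) else X y * c (i-1) y) * φ y) x) (n+1)]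
    have h0 : (fun y => (if (0:ℕ) = 0 then (0:ℝ) else X y * c (0-1) y) * φ y)
        = fun _ : ℝ => (0:ℝ) := by funext y; simp
    rw [h0, itd_zero]
    simp
  have sB : ∑ i ∈ range (n+2), (-1:ℝ)^i * iteratedDeriv i
        (fun y => (X y * deriv (c i) y + ν * deriv X y * c i y) * φ y) x
      = ∑ i ∈ range (n+1), (-1:ℝ)^i * iteratedDeriv i
          (fun y => (X y * deriv (c i) y + ν * deriv X y * c i y) * φ y) x := by
    rw [Finset.sum_range_succ]
    have h0 : (fun y => (X y * deriv (c (n+1)) y + ν * deriv X y * c (n+1) y) * φ y)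
        = fun _ : ℝ => (0:ℝ) := by
      funext y; rw [hpad (n+1) (by omega)]; simp
    rw [h0, itd_zero]
    simp
  rw [sA, sB, ← Finset.sum_add_distrib, ← Finset.sum_neg_distrib]
  refine Finset.sum_congr rfl fun i _ => ?_
  have hXc : Sm (fun y => X y * c i y * φ y) := (hX.mul (hc i)).mul hφ
  have e1 : iteratedDeriv (i+1) (fun y => X y * c i y * φ y) x
      = iteratedDeriv i (deriv (fun y => X y * c i y * φ y)) x := by
    rw [iteratedDeriv_succ']
  have key : (fun y => (X y * deriv (c i) y + ν * deriv X y * c i y) * φ y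
        - deriv (fun z => X z * c i z * φ z) y)
      = fun y => -(c i y * lieDeriv (1-ν) X φ y) := by
    funext y
    have d1 : deriv (fun z => X z * c i z * φ z) y
        = (deriv X y * c i y + X y * deriv (c i) y) * φ y
          + X y * c i y * deriv φ y := by
      rw [show (fun z => X z * c i z * φ z) = fun z => (X z * c i z) * φ z from rfl,
        deriv_fun_mul (c := fun z => X z * c i z) ((hX.dAt y).mul ((hc i).dAt y)) (hφ.dAt y),
        deriv_fun_mul (hX.dAt y) ((hc i).dAt y)]
    rw [d1]
    unfold lieDeriv
    ring
  have comb : (-1:ℝ)^i * iteratedDeriv i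
        (fun y => (X y * deriv (c i) y + ν * deriv X y * c i y) * φ y) x
      + (-1:ℝ)^(i+1) * iteratedDeriv (i+1) (fun y => X y * c i y * φ y) x
      = (-1:ℝ)^i * iteratedDeriv i
          (fun y => (X y * deriv (c i) y + ν * deriv X y * c i y) * φ y
            - deriv (fun z => X z * c i z * φ z) y) x := by
    rw [itd_sub (((hX.mul (hc i).deriv').add
        ((contDiff_const.mul hX.deriv').mul (hc i))).mul hφ) hXc.deriv', e1]
    ring
  rw [key] at comb
  have hneg : iteratedDeriv i (fun y => -(c i y * lieDeriv (1-ν) X φ y)) x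
      = -(iteratedDeriv i (fun y => c i y * lieDeriv (1-ν) X φ y) x) :=
    iteratedDeriv_neg i _ x
  rw [hneg] at comb
  linarith [comb]

lemma conjApp_eq_opApp {n : ℕ} {c : ℕ → ℝ → ℝ} {φ : ℝ → ℝ}
    (hc : ∀ i, Sm (c i)) (hφ : Sm φ) :
    ∀ x, conjApp n c φ x = opApp n (conjCoeff n c) φ x := by
  intro x
  unfold conjApp opApp conjCoeff
  have hterm : ∀ i ∈ range (n+1), (-1:ℝ)^i
        * iteratedDeriv i (fun y => c i y * φ y) x
      = ∑ j ∈ range (n+1), (-1:ℝ)^i * (i.choose j : ℝ)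
          * iteratedDeriv (i-j) (c i) x * iteratedDeriv j φ x := by
    intro i hi
    have hcomm : (fun y => c i y * φ y) = fun y => φ y * c i y := by
      funext y; ring
    rw [hcomm, itd_mul hφ (hc i) i, Finset.mul_sum]
    rw [show ∑ j ∈ range (i+1), (-1:ℝ)^i * ((i.choose j : ℝ)
          * iteratedDeriv j φ x * iteratedDeriv (i-j) (c i) x)
        = ∑ j ∈ range (i+1), (-1:ℝ)^i * (i.choose j : ℝ)
          * iteratedDeriv (i-j) (c i) x * iteratedDeriv j φ x from
      Finset.sum_congr rfl fun j _ => by ring]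
    refine Finset.sum_subset ?_ ?_
    · exact Finset.range_subset_range.mpr (by have := mem_range.mp hi; omega)
    · intro j _ hj
      have : i.choose j = 0 := Nat.choose_eq_zero_of_lt (by
        simp only [mem_range] at hj; omega)
      rw [this]; simp
  rw [Finset.sum_congr rfl hterm, Finset.sum_comm]
  refine Finset.sum_congr rfl fun j _ => ?_
  rw [Finset.sum_mul]

lemma conjCoeff_conjCoeff {n : ℕ} {c : ℕ → ℝ → ℝ}
    (hc : ∀ i, Sm (c i)) :
    ∀ j ≤ n, ∀ x, conjCoeff n (conjCoeff n c) j x = c j x := by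
  intro j hj x
  unfold conjCoeff
  have inner : ∀ i ∈ range (n+1),
      (-1:ℝ)^i * (i.choose j : ℝ) * iteratedDeriv (i-j)
        (fun x => ∑ m ∈ range (n+1), (-1:ℝ)^m * (m.choose i : ℝ)
          * iteratedDeriv (m-i) (c m) x) x
      = ∑ m ∈ range (n+1),
          (if j ≤ i ∧ i ≤ m then
            (-1:ℝ)^(i+m) * ((i.choose j : ℝ) * (m.choose i : ℝ))
              * iteratedDeriv (m-j) (c m) x
          else 0) := by
    intro i _
    rw [itd_sum (i-j) (fun m _ => contDiff_const.mul ((hc m).itd (m-i)))]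
    rw [Finset.mul_sum]
    refine Finset.sum_congr rfl fun m _ => ?_
    rw [show (fun x => (-1:ℝ)^m * (m.choose i : ℝ) * iteratedDeriv (m-i) (c m) x)
        = fun x => ((-1:ℝ)^m * (m.choose i : ℝ)) * iteratedDeriv (m-i) (c m) x from rfl,
      itd_const_mul ((hc m).itd (m-i)) _ (i-j), itd_itd]
    by_cases h : j ≤ i ∧ i ≤ m
    · rw [if_pos h]
      rw [show i - j + (m - i) = m - j by omega]
      rw [pow_add]
      ring
    · rw [if_neg h]
      rcases Nat.lt_or_ge i j with h1 | h1
      · rw [Nat.choose_eq_zero_of_lt h1]; simp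
      · have h2 : m < i := by omega
        rw [Nat.choose_eq_zero_of_lt h2]; simp
  rw [Finset.sum_congr rfl inner, Finset.sum_comm]
  have outer : ∀ m ∈ range (n+1),
      (∑ i ∈ range (n+1), if j ≤ i ∧ i ≤ m then
          (-1:ℝ)^(i+m) * ((i.choose j : ℝ) * (m.choose i : ℝ))
            * iteratedDeriv (m-j) (c m) x
        else 0)
      = (if m = j then 1 else 0) * iteratedDeriv (m-j) (c m) x := by
    intro m hm
    have hmn : m ≤ n := by have := mem_range.mp hm; omega
    rw [show (∑ i ∈ range (n+1), if j ≤ i ∧ i ≤ m then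
          (-1:ℝ)^(i+m) * ((i.choose j : ℝ) * (m.choose i : ℝ))
            * iteratedDeriv (m-j) (c m) x
        else 0)
      = (∑ i ∈ range (n+1), if j ≤ i ∧ i ≤ m then
          (-1:ℝ)^(i+m) * ((i.choose j : ℝ) * (m.choose i : ℝ)) else 0)
          * iteratedDeriv (m-j) (c m) x by
      rw [Finset.sum_mul]
      refine Finset.sum_congr rfl fun i _ => ?_
      split <;> simp]
    congr 1
    -- binomial identity
    by_cases hmj : j ≤ m
    · -- terms nonzero only for j ≤ i ≤ m; use trinomial revision
      have triv : ∀ i ∈ range (n+1), (if j ≤ i ∧ i ≤ m then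
            (-1:ℝ)^(i+m) * ((i.choose j : ℝ) * (m.choose i : ℝ)) else 0)
          = (if j ≤ i ∧ i ≤ m then
            (-1:ℝ)^(i+m) * ((m.choose j : ℝ) * ((m-j).choose (i-j) : ℝ)) else 0) := by
        intro i _
        split
        · rename_i h
          have := Nat.choose_mul (n := m) (h.1)
          -- m.choose i * i.choose j = m.choose j * (m-j).choose (i-j)
          have h2 : i.choose j * m.choose i = m.choose j * (m-j).choose (i-j) := by
            rw [mul_comm]; exact this
          congr 1
          exact_mod_cast h2
        · rfl
      rw [Finset.sum_congr rfl triv]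
      have e0 : ∑ i ∈ range (n+1), (if j ≤ i ∧ i ≤ m then
            (-1:ℝ)^(i+m) * ((m.choose j : ℝ) * ((m-j).choose (i-j) : ℝ)) else 0)
          = ∑ i ∈ Finset.Ico j (m+1), (if j ≤ i ∧ i ≤ m then
            (-1:ℝ)^(i+m) * ((m.choose j : ℝ) * ((m-j).choose (i-j) : ℝ)) else 0) := by
        refine (Finset.sum_subset ?_ ?_).symm
        · intro i hi
          simp only [Finset.mem_Ico] at hi
          exact mem_range.mpr (by omega)
        · intro i _ hi
          simp only [Finset.mem_Ico] at hi
          rw [if_neg (by omega)]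
      rw [e0, Finset.sum_Ico_eq_sum_range]
      have e1 : ∀ t ∈ range (m+1-j), (if j ≤ j+t ∧ j+t ≤ m then
            (-1:ℝ)^((j+t)+m) * ((m.choose j : ℝ) * ((m-j).choose ((j+t)-j) : ℝ)) else 0)
          = ((-1:ℝ)^(j+m) * (m.choose j : ℝ)) * ((-1:ℝ)^t * ((m-j).choose t : ℝ)) := by
        intro t ht
        have ht' : t < m+1-j := mem_range.mp ht
        rw [if_pos ⟨by omega, by omega⟩, show (j+t)-j = t by omega, pow_add, pow_add]
        ring
      rw [Finset.sum_congr rfl e1, ← Finset.mul_sum]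
      have alt : ∑ t ∈ range (m+1-j), (-1:ℝ)^t * ((m-j).choose t : ℝ)
          = if m - j = 0 then 1 else 0 := by
        have : m+1-j = (m-j)+1 := by omega
        rw [this]
        exact_mod_cast Int.alternating_sum_range_choose (n := m-j)
      rw [alt]
      by_cases hmj2 : m = j
      · rw [if_pos (show m - j = 0 by omega), if_pos hmj2, hmj2, Nat.choose_self,
          show j + j = 2*j by ring, pow_mul]
        norm_num
      · rw [if_neg (show ¬ m - j = 0 by omega), if_neg hmj2]
        ring
    · -- j > m : all terms 0 and m ≠ j
      rw [Finset.sum_eq_zero, if_neg (by omega)]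
      intro i _
      rw [if_neg (by omega)]
  rw [Finset.sum_congr rfl outer]
  rw [Finset.sum_eq_single j]
  · rw [if_pos rfl, Nat.sub_self, iteratedDeriv_zero, one_mul]
  · intro m _ hne
    rw [if_neg hne, zero_mul]
  · intro hmem
    exact absurd (mem_range.mpr (by omega)) hmem

def padf (k : ℕ) (a : ℕ → ℝ → ℝ) : ℕ → ℝ → ℝ := fun i => if i ≤ k then a i else fun _ => 0

lemma pad_padf (k : ℕ) (a : ℕ → ℝ → ℝ) : Pad k (padf k a) := by
  intro i hi; unfold padf; rw [if_neg (by omega)]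

lemma sm_padf {k : ℕ} {a : ℕ → ℝ → ℝ} (ha : ∀ i, Sm (a i)) : ∀ i, Sm (padf k a i) := by
  intro i; unfold padf; split
  · exact ha i
  · exact Sm.zero

lemma padf_eq {k i : ℕ} (a : ℕ → ℝ → ℝ) (h : i ≤ k) : padf k a i = a i := by
  unfold padf; rw [if_pos h]

lemma opApp_top_zero {n : ℕ} {c : ℕ → ℝ → ℝ} (h : c (n+1) = fun _ => 0) (φ : ℝ → ℝ) (x : ℝ) :
    opApp (n+1) c φ x = opApp n c φ x := by
  unfold opApp
  rw [Finset.sum_range_succ, h]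
  simp

lemma conjApp_top_zero {n : ℕ} {c : ℕ → ℝ → ℝ} (h : c (n+1) = fun _ => 0) (φ : ℝ → ℝ) (x : ℝ) :
    conjApp (n+1) c φ x = conjApp n c φ x := by
  unfold conjApp
  rw [Finset.sum_range_succ, h]
  have : (fun y => (fun _ : ℝ => (0:ℝ)) y * φ y) = fun _ : ℝ => (0:ℝ) := by
    funext y; simp
  rw [this, itd_zero]
  simp

lemma opApp_congr_coeff {n : ℕ} {c d : ℕ → ℝ → ℝ}
    (h : ∀ i, i ≤ n → ∀ x, c i x = d i x) (φ : ℝ → ℝ) (x : ℝ) :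
    opApp n c φ x = opApp n d φ x := by
  unfold opApp
  refine Finset.sum_congr rfl fun i hi => ?_
  rw [h i (by have := mem_range.mp hi; omega)]

lemma conjApp_congr_coeff {n : ℕ} {c d : ℕ → ℝ → ℝ}
    (h : ∀ i, i ≤ n → c i = d i) (φ : ℝ → ℝ) (x : ℝ) :
    conjApp n c φ x = conjApp n d φ x := by
  unfold conjApp
  refine Finset.sum_congr rfl fun i hi => ?_
  rw [h i (by have := mem_range.mp hi; omega)]

lemma conjApp_add {n : ℕ} {c d : ℕ → ℝ → ℝ} {φ : ℝ → ℝ}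
    (hc : ∀ i, Sm (c i)) (hd : ∀ i, Sm (d i)) (hφ : Sm φ) (x : ℝ) :
    conjApp n (fun i x => c i x + d i x) φ x = conjApp n c φ x + conjApp n d φ x := by
  unfold conjApp
  rw [← Finset.sum_add_distrib]
  refine Finset.sum_congr rfl fun i _ => ?_
  have e : (fun y => (c i y + d i y) * φ y) = fun y => c i y * φ y + d i y * φ y := by
    funext y; ring
  rw [e, itd_add ((hc i).mul hφ) ((hd i).mul hφ)]
  ring

/-- The conjugation map `C(A) = Σ (−1)^i (d/dx)^i ∘ a_i` intertwines the actions: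
`C(𝓛_X^{λ,μ}(A)) = 𝓛_X^{1−μ,1−λ}(C(A))`. -/
theorem conjugation_intertwines (lam μ : ℝ) (k : ℕ) (X : ℝ → ℝ) (a b : ℕ → ℝ → ℝ)
    (hX : ContDiff ℝ (⊤ : ℕ∞) X)
    (ha : ∀ i, ContDiff ℝ (⊤ : ℕ∞) (a i)) (hbsmooth : ∀ i, ContDiff ℝ (⊤ : ℕ∞) (b i))
    (hb : ∀ φ : ℝ → ℝ, ContDiff ℝ (⊤ : ℕ∞) φ →
      (fun x => ∑ i ∈ Finset.range (k+1), b i x * iteratedDeriv i φ x)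
        = fun x =>
            lieDeriv μ X (fun y => ∑ i ∈ Finset.range (k+1), a i y * iteratedDeriv i φ y) x
              - ∑ i ∈ Finset.range (k+1), a i x * iteratedDeriv i (lieDeriv lam X φ) x) :
    ∀ φ : ℝ → ℝ, ContDiff ℝ (⊤ : ℕ∞) φ →
      (fun x => ∑ i ∈ Finset.range (k+1), (-1:ℝ)^i * iteratedDeriv i (fun y => b i y * φ y) x)
        = fun x =>
            lieDeriv (1 - lam) X
              (fun y => ∑ i ∈ Finset.range (k+1),
                (-1:ℝ)^i * iteratedDeriv i (fun z => a i z * φ z) y) x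
              - ∑ i ∈ Finset.range (k+1),
                  (-1:ℝ)^i * iteratedDeriv i (fun y => a i y * lieDeriv (1 - μ) X φ y) x := by
  have hX' : Sm X := hX.of_le (by simp)
  have ha' : ∀ i, Sm (a i) := fun i => (ha i).of_le (by simp)
  have hb' : ∀ i, Sm (b i) := fun i => (hbsmooth i).of_le (by simp)
  set abar := padf k a with habar
  set bbar := padf k b with hbbar
  have haS : ∀ i, Sm (abar i) := sm_padf ha'
  have hbS : ∀ i, Sm (bbar i) := sm_padf hb'
  have hpa : Pad k abar := pad_padf k a
  have hpb : Pad k bbar := pad_padf k b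
  set a' := conjCoeff k abar with ha'def
  have ha'S : ∀ i, Sm (a' i) := fun i => sm_conjCoeff haS k i
  have hpa' : Pad k a' := pad_conjCoeff k
  set P := post μ X abar with hPdef
  set Q := post (1-lam) X a' with hQdef
  set R := conjCoeff (k+1) Q with hRdef
  have hPS : ∀ i, Sm (P i) := fun i => sm_post hX' haS μ i
  have hQS : ∀ i, Sm (Q i) := fun i => sm_post hX' ha'S (1-lam) i
  have hRS : ∀ i, Sm (R i) := fun i => sm_conjCoeff hQS (k+1) i
  have hpP : Pad (k+1) P := pad_post hpa μ
  have hpQ : Pad (k+1) Q := pad_post hpa' (1-lam)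
  have hpR : Pad (k+1) R := pad_conjCoeff (k+1)
  -- key: opApp k abar ψ = conjApp k a' ψ for smooth ψ
  have op_eq_conj : ∀ ψ : ℝ → ℝ, Sm ψ → ∀ x, opApp k abar ψ x = conjApp k a' ψ x := by
    intro ψ hψ x
    rw [conjApp_eq_opApp ha'S hψ x]
    refine opApp_congr_coeff (fun i hi x => ?_) ψ x
    exact (conjCoeff_conjCoeff haS i hi x).symm
  -- Step 1: action equality at level k+1
  have h_eq : ∀ φ : ℝ → ℝ, ContDiff ℝ (⊤ : ℕ∞) φ → ∀ x,
      opApp (k+1) bbar φ x = opApp (k+1) (fun i x => P i x + R i x) φ x := by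
    intro φ hφ x
    have hφ' : Sm φ := hφ.of_le (by simp)
    have e1 : opApp (k+1) bbar φ x = opApp k bbar φ x :=
      opApp_top_zero (hpb (k+1) (by omega)) φ x
    have e2 : opApp k bbar φ x = ∑ i ∈ Finset.range (k+1), b i x * iteratedDeriv i φ x := by
      unfold opApp
      refine Finset.sum_congr rfl fun i hi => ?_
      rw [hbbar, padf_eq b (by have := mem_range.mp hi; omega)]
    have e3 := congrFun (hb φ hφ) x
    have e4 : (fun y => ∑ i ∈ Finset.range (k+1), a i y * iteratedDeriv i φ y)
        = opApp k abar φ := by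
      funext y
      unfold opApp
      refine Finset.sum_congr rfl fun i hi => ?_
      rw [habar, padf_eq a (by have := mem_range.mp hi; omega)]
    have e5 : ∑ i ∈ Finset.range (k+1), a i x * iteratedDeriv i (lieDeriv lam X φ) x
        = opApp k abar (lieDeriv lam X φ) x := by
      unfold opApp
      refine Finset.sum_congr rfl fun i hi => ?_
      rw [habar, padf_eq a (by have := mem_range.mp hi; omega)]
    rw [e4, e5] at e3
    have e6 : lieDeriv μ X (opApp k abar φ) x = opApp (k+1) P φ x :=
      (opApp_post hX' haS hpa hφ' x).symm
    have e7 : opApp k abar (lieDeriv lam X φ) x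
        = -(conjApp (k+1) Q φ x) := by
      rw [op_eq_conj _ (hX'.lie hφ' lam) x]
      have := conjApp_post (ν := 1-lam) hX' ha'S hpa' hφ' x
      rw [show (1:ℝ) - (1-lam) = lam by ring] at this
      rw [this]
      ring
    have e8 : conjApp (k+1) Q φ x = opApp (k+1) R φ x := conjApp_eq_opApp hQS hφ' x
    have e9 : opApp (k+1) (fun i x => P i x + R i x) φ x
        = opApp (k+1) P φ x + opApp (k+1) R φ x := by
      unfold opApp
      rw [← Finset.sum_add_distrib]
      exact Finset.sum_congr rfl fun i _ => by ring
    rw [e1, e2, e3, e6, e7, e8, e9]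
    ring
  -- Step 2: coefficient equality
  have hcoeff : ∀ i, i ≤ k+1 → bbar i = fun x => P i x + R i x := by
    intro i hi
    exact opApp_inj h_eq i hi
  have hball : ∀ i, bbar i = fun x => P i x + R i x := by
    intro i
    by_cases hi : i ≤ k+1
    · exact hcoeff i hi
    · have h1 : bbar i = fun _ => 0 := hpb i (by omega)
      have h2 : P i = fun _ => 0 := hpP i (by omega)
      have h3 : R i = fun _ => 0 := hpR i (by omega)
      rw [h1, h2, h3]
      funext x; simp
  -- Step 3: conclusion
  intro φ hφ
  have hφ' : Sm φ := hφ.of_le (by simp)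
  funext x
  have g1 : ∑ i ∈ Finset.range (k+1), (-1:ℝ)^i * iteratedDeriv i (fun y => b i y * φ y) x
      = conjApp k bbar φ x := by
    unfold conjApp
    refine Finset.sum_congr rfl fun i hi => ?_
    rw [hbbar, padf_eq b (by have := mem_range.mp hi; omega)]
  have g2 : conjApp k bbar φ x = conjApp (k+1) bbar φ x :=
    (conjApp_top_zero (hpb (k+1) (by omega)) φ x).symm
  have g3 : conjApp (k+1) bbar φ x
      = conjApp (k+1) (fun i x => P i x + R i x) φ x :=
    conjApp_congr_coeff (fun i _ => hball i) φ x
  have g4 : conjApp (k+1) (fun i x => P i x + R i x) φ x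
      = conjApp (k+1) P φ x + conjApp (k+1) R φ x :=
    conjApp_add hPS hRS hφ' x
  have g5 : conjApp (k+1) P φ x = -(conjApp k abar (lieDeriv (1-μ) X φ) x) :=
    conjApp_post hX' haS hpa hφ' x
  have g6 : conjApp (k+1) R φ x = opApp (k+1) Q φ x := by
    rw [conjApp_eq_opApp hRS hφ' x]
    refine opApp_congr_coeff (fun i hi x => ?_) φ x
    exact conjCoeff_conjCoeff hQS i hi x
  have g7 : opApp (k+1) Q φ x = lieDeriv (1-lam) X (opApp k a' φ) x :=
    opApp_post hX' ha'S hpa' hφ' x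
  have g8 : opApp k a' φ = conjApp k abar φ := by
    funext y
    rw [conjApp_eq_opApp haS hφ' y]
  have g9 : conjApp k abar φ
      = fun y => ∑ i ∈ Finset.range (k+1),
          (-1:ℝ)^i * iteratedDeriv i (fun z => a i z * φ z) y := by
    funext y
    unfold conjApp
    refine Finset.sum_congr rfl fun i hi => ?_
    rw [habar, padf_eq a (by have := mem_range.mp hi; omega)]
  have g10 : conjApp k abar (lieDeriv (1-μ) X φ) x
      = ∑ i ∈ Finset.range (k+1),
          (-1:ℝ)^i * iteratedDeriv i (fun y => a i y * lieDeriv (1-μ) X φ y) x := by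
    unfold conjApp
    refine Finset.sum_congr rfl fun i hi => ?_
    rw [habar, padf_eq a (by have := mem_range.mp hi; omega)]
  rw [g1, g2, g3, g4, g5, g6, g7, g8, g9] at *
  rw [← g10]
  ring
end
end

section
/- Let λ ∈ ℝ, let k ∈ ℕ, let X, a_0, …, a_k : ℝ → ℝ be smooth, and let b_0, …, b_k : ℝ → ℝ be smooth functions such that Σ_{i=0}^{k} b_i·φ^{(i)} = L_X^1( Σ_{i=0}^{k} a_i·φ^{(i)} ) − Σ_{i=0}^{k} a_i·(L_X^λ φ)^{(i)} for every smooth φ : ℝ → ℝ (i.e. the target weight is μ = 1). Then Σ_{i=0}^{k} (−1)^i·b_i^{(i)} = L_X^{1−λ}( Σ_{i=0}^{k} (−1)^i·a_i^{(i)} ). (That is, the map P₀*(A) = Σ (−1)^i a_i^{(i)}, with values in densities of weight 1 − λ, is equivariant under the action of vector fields on the module of operators from λ-densities to 1-densities.) -/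
open Finset
open scoped ContDiff

/-- Boundary term in the Lagrange identity. -/
noncomputable def Sfun : (ℝ → ℝ) → (ℝ → ℝ) → ℕ → (ℝ → ℝ)
  | _, _, 0 => fun _ => 0
  | c, φ, (n+1) => fun x => c x * iteratedDeriv n φ x - Sfun (deriv c) φ n x

lemma contDiff_iteratedDeriv {f : ℝ → ℝ} (h : ContDiff ℝ ∞ f) (n : ℕ) :
    ContDiff ℝ ∞ (iteratedDeriv n f) := by
  rw [iteratedDeriv_eq_iterate]; exact h.iterate_deriv n

lemma contDiff_deriv {f : ℝ → ℝ} (h : ContDiff ℝ ∞ f) : ContDiff ℝ ∞ (deriv f) :=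
  (contDiff_infty_iff_deriv.mp h).2

lemma one_le_infty : (∞ : WithTop ℕ∞) ≠ 0 := by
  simp

lemma contDiff_Sfun (φ : ℝ → ℝ) (hφ : ContDiff ℝ ∞ φ) :
    ∀ (n : ℕ) (c : ℝ → ℝ), ContDiff ℝ ∞ c → ContDiff ℝ ∞ (Sfun c φ n)
  | 0, c, hc => by simpa [Sfun] using contDiff_const
  | (n+1), c, hc => by
      have h1 := contDiff_Sfun φ hφ n (deriv c) (contDiff_deriv hc)
      have h2 : ContDiff ℝ ∞ fun x => c x * iteratedDeriv n φ x :=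
        hc.mul (contDiff_iteratedDeriv hφ n)
      simpa [Sfun] using h2.sub h1

/-- Lagrange identity. -/
lemma lagrange (φ : ℝ → ℝ) (hφ : ContDiff ℝ ∞ φ) :
    ∀ (n : ℕ) (c : ℝ → ℝ), ContDiff ℝ ∞ c → ∀ x : ℝ,
      c x * iteratedDeriv n φ x
        = (-1:ℝ)^n * iteratedDeriv n c x * φ x + deriv (Sfun c φ n) x
  | 0, c, hc, x => by simp [Sfun]
  | (n+1), c, hc, x => by
      have hc' : ContDiff ℝ ∞ (deriv c) := contDiff_deriv hc
      have IH := lagrange φ hφ n (deriv c) hc' x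
      rw [← iteratedDeriv_succ'] at IH
      have hd1 : DifferentiableAt ℝ (fun y => c y * iteratedDeriv n φ y) x :=
        ((hc.mul (contDiff_iteratedDeriv hφ n)).differentiable one_le_infty).differentiableAt
      have hd2 : DifferentiableAt ℝ (Sfun (deriv c) φ n) x :=
        ((contDiff_Sfun φ hφ n (deriv c) hc').differentiable one_le_infty).differentiableAt
      have e1 : deriv (Sfun c φ (n+1)) x
          = deriv (fun y => c y * iteratedDeriv n φ y) x - deriv (Sfun (deriv c) φ n) x := by
        have : Sfun c φ (n+1) = fun y => c y * iteratedDeriv n φ y - Sfun (deriv c) φ n y := rfl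
        rw [this, deriv_fun_sub hd1 hd2]
      have e2 : deriv (fun y => c y * iteratedDeriv n φ y) x
          = deriv c x * iteratedDeriv n φ x + c x * iteratedDeriv (n+1) φ x := by
        rw [deriv_fun_mul ((hc.differentiable one_le_infty).differentiableAt)
          (((contDiff_iteratedDeriv hφ n).differentiable one_le_infty).differentiableAt),
          iteratedDeriv_succ]
      rw [e1, e2, pow_succ]
      linear_combination -IH




/-- `Φ t x = (∑_{j<N} c j x * t^j) * exp (t*x)` with smooth coefficients. -/
def ExpPolyN (N : ℕ) (Φ : ℝ → ℝ → ℝ) : Prop :=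
  ∃ c : ℕ → ℝ → ℝ, (∀ j, ContDiff ℝ ∞ (c j)) ∧ (∀ j, N ≤ j → c j = fun _ => 0) ∧
    ∀ t x, Φ t x = (∑ j ∈ Finset.range N, c j x * t ^ j) * Real.exp (t * x)

def ExpPoly (Φ : ℝ → ℝ → ℝ) : Prop := ∃ N, ExpPolyN N Φ

lemma ExpPolyN.mono {N M : ℕ} {Φ} (h : ExpPolyN N Φ) (hNM : N ≤ M) : ExpPolyN M Φ := by
  obtain ⟨c, hc, hv, he⟩ := h
  refine ⟨c, hc, fun j hj => hv j (hNM.trans hj), fun t x => ?_⟩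
  rw [he t x]
  have : (∑ j ∈ Finset.range N, c j x * t ^ j) = ∑ j ∈ Finset.range M, c j x * t ^ j := by
    refine Finset.sum_subset (Finset.range_subset_range.mpr hNM) (fun j _ hj => ?_)
    rw [congrFun (hv j (Nat.le_of_not_lt (fun h => hj (Finset.mem_range.mpr h)))) x, zero_mul]
  rw [this]

lemma expPolyN_exp : ExpPolyN 1 (fun t x => Real.exp (t * x)) := by
  refine ⟨fun j => if j = 0 then (fun _ => 1) else (fun _ => 0), ?_, ?_, ?_⟩
  · intro j; dsimp only; split <;> exact contDiff_const
  · intro j hj; dsimp only; rw [if_neg (by omega)]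
  · intro t x; simp

lemma expPolyN_zero (N : ℕ) : ExpPolyN N (fun _ _ => 0) :=
  ⟨fun _ _ => 0, fun _ => contDiff_const, fun _ _ => rfl, by simp⟩

lemma ExpPolyN.add {N : ℕ} {Φ Ψ} (h1 : ExpPolyN N Φ) (h2 : ExpPolyN N Ψ) :
    ExpPolyN N (fun t x => Φ t x + Ψ t x) := by
  obtain ⟨c, hc, hv, he⟩ := h1
  obtain ⟨d, hd, hw, hf⟩ := h2
  refine ⟨fun j x => c j x + d j x, fun j => (hc j).add (hd j), fun j hj => ?_, fun t x => ?_⟩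
  · funext x
    show c j x + d j x = 0
    rw [congrFun (hv j hj) x, congrFun (hw j hj) x, add_zero]
  · show Φ t x + Ψ t x = _
    rw [he t x, hf t x, ← add_mul, ← Finset.sum_add_distrib]
    congr 1
    exact Finset.sum_congr rfl fun j _ => by ring

lemma ExpPolyN.mul_left {N : ℕ} {Φ} (g : ℝ → ℝ) (hg : ContDiff ℝ ∞ g) (h : ExpPolyN N Φ) :
    ExpPolyN N (fun t x => g x * Φ t x) := by
  obtain ⟨c, hc, hv, he⟩ := h
  refine ⟨fun j x => g x * c j x, fun j => hg.mul (hc j), fun j hj => ?_, fun t x => ?_⟩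
  · funext x
    show g x * c j x = 0
    rw [congrFun (hv j hj) x, mul_zero]
  · show g x * Φ t x = _
    rw [he t x, ← mul_assoc]
    congr 1
    rw [Finset.mul_sum]
    exact Finset.sum_congr rfl fun j _ => by ring

lemma ExpPolyN.sub {N : ℕ} {Φ Ψ} (h1 : ExpPolyN N Φ) (h2 : ExpPolyN N Ψ) :
    ExpPolyN N (fun t x => Φ t x - Ψ t x) := by
  have := h1.add (h2.mul_left (fun _ => (-1:ℝ)) contDiff_const)
  have e : (fun t x => Φ t x + (fun t x => (-1:ℝ) * Ψ t x) t x) = fun t x => Φ t x - Ψ t x := by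
    funext t x; ring
  rwa [e] at this

lemma expPolyN_deriv {N : ℕ} {Φ} (h : ExpPolyN N Φ) :
    ExpPolyN (N + 1) (fun t x => deriv (Φ t) x) := by
  obtain ⟨c, hc, hv, he⟩ := h
  have hder : ∀ t x, deriv (Φ t) x
      = (∑ j ∈ Finset.range N, deriv (c j) x * t ^ j) * Real.exp (t * x)
        + (∑ j ∈ Finset.range N, c j x * t ^ j) * (Real.exp (t * x) * t) := by
    intro t x
    have hfun : Φ t = fun x => (∑ j ∈ Finset.range N, c j x * t ^ j) * Real.exp (t * x) :=
      funext (he t)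
    have h1 : HasDerivAt (fun x => ∑ j ∈ Finset.range N, c j x * t ^ j)
        (∑ j ∈ Finset.range N, deriv (c j) x * t ^ j) x := by
      refine HasDerivAt.fun_sum fun j _ => ?_
      exact (((hc j).differentiable one_le_infty).differentiableAt.hasDerivAt).mul_const _
    have h2 : HasDerivAt (fun x : ℝ => Real.exp (t * x)) (Real.exp (t * x) * t) x := by
      simpa using ((hasDerivAt_id x).const_mul t).exp
    rw [hfun]
    exact (h1.mul h2).deriv
  refine ⟨fun j x => deriv (c j) x + (if j = 0 then 0 else c (j-1) x),
    fun j => ?_, fun j hj => ?_, fun t x => ?_⟩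
  · refine ((contDiff_infty_iff_deriv.mp (hc j)).2).add ?_
    rcases Nat.eq_zero_or_pos j with h0 | h0
    · have : (fun x => if j = 0 then (0:ℝ) else c (j-1) x) = fun _ => (0:ℝ) := by
        funext x; rw [if_pos h0]
      rw [this]; exact contDiff_const
    · have : (fun x => if j = 0 then (0:ℝ) else c (j-1) x) = c (j-1) := by
        funext x; rw [if_neg (by omega)]
      rw [this]; exact hc (j-1)
  · funext x
    show deriv (c j) x + (if j = 0 then 0 else c (j-1) x) = 0
    have e1 : deriv (c j) = fun _ => (0:ℝ) := by
      rw [hv j (by omega)]; funext y; simp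
    rw [congrFun e1 x, if_neg (by omega), congrFun (hv (j-1) (by omega)) x, add_zero]
  · show deriv (Φ t) x = _
    rw [hder t x]
    have split : ∑ j ∈ Finset.range (N+1),
        (deriv (c j) x + (if j = 0 then 0 else c (j-1) x)) * t ^ j
        = (∑ j ∈ Finset.range (N+1), deriv (c j) x * t ^ j)
          + ∑ j ∈ Finset.range (N+1), (if j = 0 then 0 else c (j-1) x) * t ^ j := by
      rw [← Finset.sum_add_distrib]
      exact Finset.sum_congr rfl fun j _ => by ring
    have s1 : ∑ j ∈ Finset.range (N+1), deriv (c j) x * t ^ j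
        = ∑ j ∈ Finset.range N, deriv (c j) x * t ^ j := by
      rw [Finset.sum_range_succ]
      have : deriv (c N) = fun _ => (0:ℝ) := by
        rw [hv N le_rfl]; funext y; simp
      rw [congrFun this x]; ring
    have s2 : ∑ j ∈ Finset.range (N+1), (if j = 0 then 0 else c (j-1) x) * t ^ j
        = ∑ j ∈ Finset.range N, c j x * t ^ (j+1) := by
      rw [Finset.sum_range_succ']
      simp
    have s3 : (∑ j ∈ Finset.range N, c j x * t ^ (j+1))
        = (∑ j ∈ Finset.range N, c j x * t ^ j) * t := by
      rw [Finset.sum_mul]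
      exact Finset.sum_congr rfl fun j _ => by ring
    rw [split, s1, s2, s3, add_mul]
    ring


-- now the ExpPoly level

namespace ExpPoly

lemma exp : ExpPoly (fun t x => Real.exp (t * x)) := ⟨1, expPolyN_exp⟩

lemma zero : ExpPoly (fun _ _ => 0) := ⟨0, expPolyN_zero 0⟩

lemma add {Φ Ψ} (h1 : ExpPoly Φ) (h2 : ExpPoly Ψ) : ExpPoly (fun t x => Φ t x + Ψ t x) := by
  obtain ⟨N, h1⟩ := h1; obtain ⟨M, h2⟩ := h2
  exact ⟨max N M, (h1.mono (le_max_left _ _)).add (h2.mono (le_max_right _ _))⟩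

lemma sub {Φ Ψ} (h1 : ExpPoly Φ) (h2 : ExpPoly Ψ) : ExpPoly (fun t x => Φ t x - Ψ t x) := by
  obtain ⟨N, h1⟩ := h1; obtain ⟨M, h2⟩ := h2
  exact ⟨max N M, (h1.mono (le_max_left _ _)).sub (h2.mono (le_max_right _ _))⟩

lemma mul_left {Φ} (g : ℝ → ℝ) (hg : ContDiff ℝ ∞ g) (h : ExpPoly Φ) :
    ExpPoly (fun t x => g x * Φ t x) := by
  obtain ⟨N, h⟩ := h; exact ⟨N, h.mul_left g hg⟩

lemma derivx {Φ} (h : ExpPoly Φ) : ExpPoly (fun t x => deriv (Φ t) x) := by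
  obtain ⟨N, h⟩ := h; exact ⟨N+1, expPolyN_deriv h⟩

lemma iteratedDerivx {Φ} (h : ExpPoly Φ) (n : ℕ) :
    ExpPoly (fun t x => iteratedDeriv n (Φ t) x) := by
  induction n with
  | zero => simpa [iteratedDeriv_zero] using h
  | succ n ih =>
      have := ih.derivx
      simpa [iteratedDeriv_succ] using this

lemma sum {m : ℕ} {Φ : ℕ → ℝ → ℝ → ℝ} (h : ∀ i, ExpPoly (Φ i)) :
    ExpPoly (fun t x => ∑ i ∈ Finset.range m, Φ i t x) := by
  induction m with
  | zero => simpa using zero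
  | succ m ih =>
      have := ih.add (h m)
      have e : (fun t x => (∑ i ∈ Finset.range m, Φ i t x) + Φ m t x)
          = fun t x => ∑ i ∈ Finset.range (m+1), Φ i t x := by
        funext t x; rw [Finset.sum_range_succ]
      rwa [e] at this

lemma sfun {Ψ} (hΨ : ExpPoly Ψ) :
    ∀ (n : ℕ) (c : ℝ → ℝ), ContDiff ℝ ∞ c → ExpPoly (fun t x => Sfun c (Ψ t) n x)
  | 0, c, hc => by
      have : (fun t x => Sfun c (Ψ t) 0 x) = fun _ _ => (0:ℝ) := rfl
      rw [this]; exact zero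
  | (n+1), c, hc => by
      have h1 : ExpPoly (fun t x => c x * iteratedDeriv n (Ψ t) x) :=
        (hΨ.iteratedDerivx n).mul_left c hc
      have h2 := sfun hΨ n (deriv c) ((contDiff_infty_iff_deriv.mp hc).2)
      have := h1.sub h2
      exact this

lemma lie {Φ} (lam : ℝ) (X : ℝ → ℝ) (hX : ContDiff ℝ ∞ X) (h : ExpPoly Φ) :
    ExpPoly (fun t x => lieDeriv lam X (Φ t) x) := by
  have h1 := h.derivx.mul_left X hX
  have h2 := h.mul_left (fun x => lam * deriv X x)
    (contDiff_const.mul (contDiff_infty_iff_deriv.mp hX).2)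
  exact h1.add h2

end ExpPoly

lemma poly_coeff_zero {M : ℕ} (d : ℕ → ℝ) (h : ∀ t : ℝ, ∑ j ∈ Finset.range M, d j * t ^ j = 0) :
    ∀ j < M, d j = 0 := by
  have hp : (∑ j ∈ Finset.range M, Polynomial.C (d j) * Polynomial.X ^ j : Polynomial ℝ) = 0 := by
    apply Polynomial.funext; intro r
    simpa [Polynomial.eval_finset_sum] using h r
  intro j hj
  have h2 := congrArg (fun p => Polynomial.coeff p j) hp
  simpa [Polynomial.finset_sum_coeff, Polynomial.coeff_C_mul, Polynomial.coeff_X_pow,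
    Finset.sum_ite_eq, hj] using h2

/-- Main extraction lemma. -/
lemma extraction {H : ℝ → ℝ} {Φ} (hΦ : ExpPoly Φ)
    (h : ∀ t x, Real.exp (t * x) * H x = deriv (Φ t) x) : ∀ x, H x = 0 := by
  obtain ⟨N, c, hc, hv, he⟩ := hΦ
  have hder : ∀ t x, deriv (Φ t) x
      = (∑ j ∈ Finset.range N, deriv (c j) x * t ^ j) * Real.exp (t * x)
        + (∑ j ∈ Finset.range N, c j x * t ^ j) * (Real.exp (t * x) * t) := by
    intro t x
    have hfun : Φ t = fun x => (∑ j ∈ Finset.range N, c j x * t ^ j) * Real.exp (t * x) :=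
      funext (he t)
    have h1 : HasDerivAt (fun x => ∑ j ∈ Finset.range N, c j x * t ^ j)
        (∑ j ∈ Finset.range N, deriv (c j) x * t ^ j) x := by
      refine HasDerivAt.fun_sum fun j _ => ?_
      exact (((hc j).differentiable one_le_infty).differentiableAt.hasDerivAt).mul_const _
    have h2 : HasDerivAt (fun x : ℝ => Real.exp (t * x)) (Real.exp (t * x) * t) x := by
      simpa using ((hasDerivAt_id x).const_mul t).exp
    rw [hfun]
    exact (h1.mul h2).deriv
  -- basic relation with exp cancelled
  have hrel : ∀ t x : ℝ, H x = (∑ j ∈ Finset.range N, deriv (c j) x * t ^ j)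
      + (∑ j ∈ Finset.range N, c j x * t ^ j) * t := by
    intro t x
    have := (h t x).trans (hder t x)
    have h2 : Real.exp (t * x) * H x
        = Real.exp (t * x) * ((∑ j ∈ Finset.range N, deriv (c j) x * t ^ j)
          + (∑ j ∈ Finset.range N, c j x * t ^ j) * t) := by linear_combination this
    exact mul_left_cancel₀ (Real.exp_ne_zero (t * x)) h2
  -- package into a single vanishing polynomial in t
  have claim : ∀ x t : ℝ, ∑ j ∈ Finset.range (N+1),
      (deriv (c j) x + (if j = 0 then -H x else c (j-1) x)) * t ^ j = 0 := by
    intro x t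
    have split : ∑ j ∈ Finset.range (N+1),
        (deriv (c j) x + (if j = 0 then -H x else c (j-1) x)) * t ^ j
        = (∑ j ∈ Finset.range (N+1), deriv (c j) x * t ^ j)
          + ∑ j ∈ Finset.range (N+1), (if j = 0 then -H x else c (j-1) x) * t ^ j := by
      rw [← Finset.sum_add_distrib]
      exact Finset.sum_congr rfl fun j _ => by ring
    have s1 : ∑ j ∈ Finset.range (N+1), deriv (c j) x * t ^ j
        = ∑ j ∈ Finset.range N, deriv (c j) x * t ^ j := by
      rw [Finset.sum_range_succ]
      have : deriv (c N) = fun _ => (0:ℝ) := by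
        rw [hv N le_rfl]; funext y; simp
      rw [congrFun this x]; ring
    have s2 : ∑ j ∈ Finset.range (N+1), (if j = 0 then -H x else c (j-1) x) * t ^ j
        = (∑ j ∈ Finset.range N, c j x * t ^ (j+1)) + (- H x) := by
      rw [Finset.sum_range_succ']
      simp
    have s3 : (∑ j ∈ Finset.range N, c j x * t ^ (j+1))
        = (∑ j ∈ Finset.range N, c j x * t ^ j) * t := by
      rw [Finset.sum_mul]
      exact Finset.sum_congr rfl fun j _ => by ring
    rw [split, s1, s2, s3]
    linear_combination - hrel t x
  have hcoeff : ∀ x : ℝ, ∀ j < N + 1,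
      deriv (c j) x + (if j = 0 then -H x else c (j-1) x) = 0 := fun x =>
    poly_coeff_zero _ (claim x)
  -- downward induction: all coefficients vanish
  have hzero : ∀ m, m ≤ N → ∀ x, c (N - m) x = 0 := by
    intro m
    induction m with
    | zero => intro _ x; simpa using congrFun (hv N le_rfl) x
    | succ m ih =>
        intro hm x
        have h1 : c (N - m) = fun _ => (0:ℝ) := funext (ih (by omega))
        have h3 : deriv (c (N - m)) = fun _ => (0:ℝ) := by rw [h1]; funext y; simp
        have h2 := hcoeff x (N - m) (by omega)
        rw [if_neg (by omega), congrFun h3 x] at h2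
        have : N - (m + 1) = N - m - 1 := by omega
        rw [this]
        linarith
  intro x
  have hc0 : c 0 = fun _ => (0:ℝ) := by
    have := hzero N le_rfl
    simpa using funext this
  have h3 : deriv (c 0) = fun _ => (0:ℝ) := by rw [hc0]; funext y; simp
  have h2 := hcoeff x 0 (by omega)
  rw [if_pos rfl, congrFun h3 x] at h2
  linarith

noncomputable def Aop (k : ℕ) (a : ℕ → ℝ → ℝ) (φ : ℝ → ℝ) : ℝ → ℝ :=
  fun y => ∑ i ∈ Finset.range (k+1), a i y * iteratedDeriv i φ y

noncomputable def Gop (k : ℕ) (a : ℕ → ℝ → ℝ) : ℝ → ℝ :=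
  fun y => ∑ i ∈ Finset.range (k+1), (-1:ℝ)^i * iteratedDeriv i (a i) y

noncomputable def SAop (k : ℕ) (a : ℕ → ℝ → ℝ) (ψ : ℝ → ℝ) : ℝ → ℝ :=
  fun y => ∑ i ∈ Finset.range (k+1), Sfun (a i) ψ i y

lemma contDiff_lieDeriv (lam : ℝ) {X φ : ℝ → ℝ} (hX : ContDiff ℝ ∞ X)
    (hφ : ContDiff ℝ ∞ φ) : ContDiff ℝ ∞ (lieDeriv lam X φ) :=
  (hX.mul (contDiff_deriv hφ)).add ((contDiff_const.mul (contDiff_deriv hX)).mul hφ)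

lemma contDiff_Aop {k : ℕ} {a : ℕ → ℝ → ℝ} {φ : ℝ → ℝ} (ha : ∀ i, ContDiff ℝ ∞ (a i))
    (hφ : ContDiff ℝ ∞ φ) : ContDiff ℝ ∞ (Aop k a φ) :=
  ContDiff.sum fun i _ => (ha i).mul (contDiff_iteratedDeriv hφ i)

lemma contDiff_Gop {k : ℕ} {a : ℕ → ℝ → ℝ} (ha : ∀ i, ContDiff ℝ ∞ (a i)) :
    ContDiff ℝ ∞ (Gop k a) :=
  ContDiff.sum fun i _ => contDiff_const.mul (contDiff_iteratedDeriv (ha i) i)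

lemma contDiff_SAop {k : ℕ} {a : ℕ → ℝ → ℝ} {ψ : ℝ → ℝ} (ha : ∀ i, ContDiff ℝ ∞ (a i))
    (hψ : ContDiff ℝ ∞ ψ) : ContDiff ℝ ∞ (SAop k a ψ) :=
  ContDiff.sum fun i _ => contDiff_Sfun ψ hψ i (a i) (ha i)

/-- Summed Lagrange identity ("formal adjoint applied to 1"). -/
lemma adjoint {k : ℕ} {c : ℕ → ℝ → ℝ} {φ : ℝ → ℝ} (hc : ∀ i, ContDiff ℝ ∞ (c i))
    (hφ : ContDiff ℝ ∞ φ) (x : ℝ) :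
    Aop k c φ x = Gop k c x * φ x + deriv (SAop k c φ) x := by
  have hd : ∀ i ∈ Finset.range (k+1), DifferentiableAt ℝ (Sfun (c i) φ i) x := fun i _ =>
    ((contDiff_Sfun φ hφ i (c i) (hc i)).differentiable one_le_infty).differentiableAt
  show (∑ i ∈ Finset.range (k+1), c i x * iteratedDeriv i φ x) = _
  have : deriv (SAop k c φ) x = ∑ i ∈ Finset.range (k+1), deriv (Sfun (c i) φ i) x :=
    deriv_fun_sum hd
  rw [this]
  have : Gop k c x * φ x = ∑ i ∈ Finset.range (k+1), (-1:ℝ)^i * iteratedDeriv i (c i) x * φ x := by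
    show (∑ i ∈ Finset.range (k+1), (-1:ℝ)^i * iteratedDeriv i (c i) x) * φ x = _
    rw [Finset.sum_mul]
  rw [this, ← Finset.sum_add_distrib]
  exact Finset.sum_congr rfl fun i _ => lagrange φ hφ i (c i) (hc i) x

lemma lie_one {X f : ℝ → ℝ} (hX : ContDiff ℝ ∞ X) (hf : ContDiff ℝ ∞ f) (x : ℝ) :
    lieDeriv 1 X f x = deriv (fun y => X y * f y) x := by
  rw [deriv_fun_mul ((hX.differentiable one_le_infty).differentiableAt)
    ((hf.differentiable one_le_infty).differentiableAt)]
  show X x * deriv f x + 1 * deriv X x * f x = _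
  ring

lemma lie_dual (lam : ℝ) {X G φ : ℝ → ℝ} (hX : ContDiff ℝ ∞ X) (hG : ContDiff ℝ ∞ G)
    (hφ : ContDiff ℝ ∞ φ) (x : ℝ) :
    G x * lieDeriv lam X φ x
      = deriv (fun y => (G y * X y) * φ y) x - φ x * lieDeriv (1-lam) X G x := by
  have dX := (hX.differentiable one_le_infty).differentiableAt (x := x)
  have dG := (hG.differentiable one_le_infty).differentiableAt (x := x)
  have dφ := (hφ.differentiable one_le_infty).differentiableAt (x := x)
  rw [deriv_fun_mul (dG.fun_mul dX) dφ, deriv_fun_mul dG dX]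
  show G x * (X x * deriv φ x + lam * deriv X x * φ x)
    = ((deriv G x * X x + G x * deriv X x) * φ x + G x * X x * deriv φ x)
      - φ x * (X x * deriv G x + (1-lam) * deriv X x * G x)
  ring

/-- Key pointwise identity. -/
lemma key (lam : ℝ) (k : ℕ) (X : ℝ → ℝ) (a b : ℕ → ℝ → ℝ)
    (hX : ContDiff ℝ ∞ X) (ha : ∀ i, ContDiff ℝ ∞ (a i)) (hbs : ∀ i, ContDiff ℝ ∞ (b i))
    (φ : ℝ → ℝ) (hφ : ContDiff ℝ ∞ φ)
    (hbφ : ∀ x, Aop k b φ x = lieDeriv 1 X (Aop k a φ) x - Aop k a (lieDeriv lam X φ) x)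
    (x : ℝ) :
    φ x * (Gop k b x - lieDeriv (1-lam) X (Gop k a) x)
      = deriv (fun y => X y * Aop k a φ y - (Gop k a y * X y) * φ y
          - SAop k a (lieDeriv lam X φ) y - SAop k b φ y) x := by
  have hL : ContDiff ℝ ∞ (lieDeriv lam X φ) := contDiff_lieDeriv lam hX hφ
  have hA : ContDiff ℝ ∞ (Aop k a φ) := contDiff_Aop ha hφ
  have hG : ContDiff ℝ ∞ (Gop k a) := contDiff_Gop ha
  have hSA : ContDiff ℝ ∞ (SAop k a (lieDeriv lam X φ)) := contDiff_SAop ha hL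
  have hSB : ContDiff ℝ ∞ (SAop k b φ) := contDiff_SAop hbs hφ
  have dX := (hX.differentiable one_le_infty).differentiableAt (x := x)
  have dA := (hA.differentiable one_le_infty).differentiableAt (x := x)
  have dG := (hG.differentiable one_le_infty).differentiableAt (x := x)
  have dφ := (hφ.differentiable one_le_infty).differentiableAt (x := x)
  have dSA := (hSA.differentiable one_le_infty).differentiableAt (x := x)
  have dSB := (hSB.differentiable one_le_infty).differentiableAt (x := x)
  have E1 : Aop k b φ x = Gop k b x * φ x + deriv (SAop k b φ) x := adjoint hbs hφ x
  have E2 : lieDeriv 1 X (Aop k a φ) x = deriv (fun y => X y * Aop k a φ y) x :=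
    lie_one hX hA x
  have E3 : Aop k a (lieDeriv lam X φ) x
      = Gop k a x * lieDeriv lam X φ x + deriv (SAop k a (lieDeriv lam X φ)) x :=
    adjoint ha hL x
  have E4 : Gop k a x * lieDeriv lam X φ x
      = deriv (fun y => (Gop k a y * X y) * φ y) x - φ x * lieDeriv (1-lam) X (Gop k a) x :=
    lie_dual lam hX hG hφ x
  have d1 : DifferentiableAt ℝ (fun y => X y * Aop k a φ y) x := dX.mul dA
  have d2 : DifferentiableAt ℝ (fun y => (Gop k a y * X y) * φ y) x := (dG.mul dX).mul dφ
  have E5 : deriv (fun y => X y * Aop k a φ y - (Gop k a y * X y) * φ y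
        - SAop k a (lieDeriv lam X φ) y - SAop k b φ y) x
      = deriv (fun y => X y * Aop k a φ y) x - deriv (fun y => (Gop k a y * X y) * φ y) x
        - deriv (SAop k a (lieDeriv lam X φ)) x - deriv (SAop k b φ) x := by
    rw [deriv_fun_sub ((d1.fun_sub d2).fun_sub dSA) dSB, deriv_fun_sub (d1.fun_sub d2) dSA, deriv_fun_sub d1 d2]
  linear_combination hbφ x - E1 + E2 - E3 - E4 - E5

/-- The map `P₀*(A) = Σ (−1)^i a_i^{(i)}`, with values in densities of weight `1 − λ`,
is equivariant under the action of vector fields on the module of operators from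
λ-densities to 1-densities. -/
theorem P0star_equivariant (lam : ℝ) (k : ℕ) (X : ℝ → ℝ) (a b : ℕ → ℝ → ℝ)
    (hX : ContDiff ℝ (⊤ : ℕ∞) X)
    (ha : ∀ i, ContDiff ℝ (⊤ : ℕ∞) (a i)) (hbsmooth : ∀ i, ContDiff ℝ (⊤ : ℕ∞) (b i))
    (hb : ∀ φ : ℝ → ℝ, ContDiff ℝ (⊤ : ℕ∞) φ →
      (fun x => ∑ i ∈ Finset.range (k+1), b i x * iteratedDeriv i φ x)
        = fun x =>
            lieDeriv 1 X (fun y => ∑ i ∈ Finset.range (k+1), a i y * iteratedDeriv i φ y) x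
              - ∑ i ∈ Finset.range (k+1), a i x * iteratedDeriv i (lieDeriv lam X φ) x) :
    (fun x => ∑ i ∈ Finset.range (k+1), (-1:ℝ)^i * iteratedDeriv i (b i) x)
      = lieDeriv (1 - lam) X
          (fun x => ∑ i ∈ Finset.range (k+1), (-1:ℝ)^i * iteratedDeriv i (a i) x) := by
  have hX' : ContDiff ℝ ∞ X := hX.of_le (by simp)
  have ha' : ∀ i, ContDiff ℝ ∞ (a i) := fun i => (ha i).of_le (by simp)
  have hbs' : ∀ i, ContDiff ℝ ∞ (b i) := fun i => (hbsmooth i).of_le (by simp)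
  have hexp : ∀ t : ℝ, ContDiff ℝ (⊤ : ℕ∞) (fun x : ℝ => Real.exp (t * x)) := fun t =>
    Real.contDiff_exp.comp (contDiff_const.mul contDiff_id)
  have hE : ExpPoly (fun t x => Real.exp (t * x)) := ExpPoly.exp
  have hΦ : ExpPoly (fun t x =>
      X x * Aop k a (fun y => Real.exp (t * y)) x
        - (Gop k a x * X x) * Real.exp (t * x)
        - SAop k a (lieDeriv lam X (fun y => Real.exp (t * y))) x
        - SAop k b (fun y => Real.exp (t * y)) x) := by
    have h1 : ExpPoly (fun t x => X x * Aop k a (fun y => Real.exp (t * y)) x) := by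
      have hs : ExpPoly (fun t x => ∑ i ∈ Finset.range (k+1),
          a i x * iteratedDeriv i (fun y => Real.exp (t * y)) x) :=
        ExpPoly.sum fun i => (hE.iteratedDerivx i).mul_left (a i) (ha' i)
      exact hs.mul_left X hX'
    have h2 : ExpPoly (fun t x => (Gop k a x * X x) * Real.exp (t * x)) :=
      hE.mul_left (fun x => Gop k a x * X x) ((contDiff_Gop ha').mul hX')
    have hlie : ExpPoly (fun t x => lieDeriv lam X (fun y => Real.exp (t * y)) x) :=
      hE.lie lam X hX'
    have h3 : ExpPoly (fun t x =>
        SAop k a (lieDeriv lam X (fun y => Real.exp (t * y))) x) :=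
      ExpPoly.sum fun i => ExpPoly.sfun hlie i (a i) (ha' i)
    have h4 : ExpPoly (fun t x => SAop k b (fun y => Real.exp (t * y)) x) :=
      ExpPoly.sum fun i => ExpPoly.sfun hE i (b i) (hbs' i)
    exact ((h1.sub h2).sub h3).sub h4
  have main : ∀ x, Gop k b x - lieDeriv (1-lam) X (Gop k a) x = 0 := by
    refine extraction (H := fun x => Gop k b x - lieDeriv (1-lam) X (Gop k a) x) hΦ ?_
    intro t x
    have hφt : ContDiff ℝ ∞ (fun y : ℝ => Real.exp (t * y)) := (hexp t).of_le (by simp)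
    have hbφ : ∀ x, Aop k b (fun y => Real.exp (t*y)) x
        = lieDeriv 1 X (Aop k a (fun y => Real.exp (t*y))) x
          - Aop k a (lieDeriv lam X (fun y => Real.exp (t*y))) x := by
      intro x
      exact congrFun (hb (fun y => Real.exp (t*y)) (hexp t)) x
    exact key lam k X a b hX' ha' hbs' _ hφt hbφ x
  funext x
  have h0 := main x
  have : Gop k b x = lieDeriv (1-lam) X (Gop k a) x := by linarith
  exact this
end

section
/- Let λ ∈ ℝ with λ ≠ 1, and let V be the ℝ-vector space of smooth functions ℝ → ℝ that are periodic of period 1 (modeling λ-densities on the circle S¹ = ℝ/ℤ). Let τ : V → ℝ be a linear functional such that τ(X·φ' + λ·X'·φ) = 0 for all X, φ ∈ V. Then τ = 0. (That is, for λ ≠ 1 there is no non-trivial linear functional on the space of λ-densities on S¹ invariant under the action of vector fields.) -/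
/-- The space of smooth 1-periodic functions `ℝ → ℝ`, modeling densities on the circle
`S¹ = ℝ/ℤ`. -/
noncomputable def smoothPeriodic : Submodule ℝ (ℝ → ℝ) where
  carrier := {f | ContDiff ℝ (⊤ : ℕ∞) f ∧ Function.Periodic f 1}
  add_mem' hf hg := ⟨hf.1.add hg.1, hf.2.add hg.2⟩
  zero_mem' := ⟨contDiff_const, fun _ => rfl⟩
  smul_mem' c f hf := ⟨hf.1.const_smul c, fun x => by
    have := hf.2 x
    simp only [Pi.smul_apply, smul_eq_mul, this]⟩

open Real intervalIntegral Filter Topology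
open scoped ENNReal NNReal

namespace NoInvAux

lemma sin2pi_hasDeriv (x : ℝ) :
    HasDerivAt (fun x : ℝ => Real.sin (2 * π * x)) (2 * π * Real.cos (2 * π * x)) x := by
  have h2 : HasDerivAt (fun x : ℝ => 2 * π * x) (2 * π) x := by
    simpa using (hasDerivAt_id x).const_mul (2 * π)
  simpa [mul_comm] using h2.sin

lemma cos2pi_hasDeriv (x : ℝ) :
    HasDerivAt (fun x : ℝ => Real.cos (2 * π * x)) (-(2 * π * Real.sin (2 * π * x))) x := by
  have h2 : HasDerivAt (fun x : ℝ => 2 * π * x) (2 * π) x := by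
    simpa using (hasDerivAt_id x).const_mul (2 * π)
  simpa [mul_comm, neg_mul, mul_neg] using h2.cos

lemma sin2pi_mem : (fun x : ℝ => Real.sin (2 * π * x)) ∈ smoothPeriodic := by
  refine ⟨Real.contDiff_sin.comp (contDiff_const.mul contDiff_id), fun x => ?_⟩
  show Real.sin (2 * π * (x + 1)) = Real.sin (2 * π * x)
  have h : 2 * π * (x + 1) = 2 * π * x + 2 * π := by ring
  rw [h, Real.sin_add_two_pi]

lemma cos2pi_mem : (fun x : ℝ => Real.cos (2 * π * x)) ∈ smoothPeriodic := by
  refine ⟨Real.contDiff_cos.comp (contDiff_const.mul contDiff_id), fun x => ?_⟩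
  show Real.cos (2 * π * (x + 1)) = Real.cos (2 * π * x)
  have h : 2 * π * (x + 1) = 2 * π * x + 2 * π := by ring
  rw [h, Real.cos_add_two_pi]

/-- The test density `g₀ = X·φ' + λ·X'·φ` with `X = sin(2πx)`, `φ = cos(2πx)`. -/
noncomputable def g0 (lam : ℝ) : ℝ → ℝ :=
  fun x => -(2 * π) * Real.sin (2 * π * x) ^ 2 + lam * (2 * π) * Real.cos (2 * π * x) ^ 2

lemma g0_mem (lam : ℝ) : g0 lam ∈ smoothPeriodic := by
  have hs := sin2pi_mem
  have hc := cos2pi_mem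
  refine ⟨?_, fun x => ?_⟩
  · exact ((hs.1.pow 2).const_smul (-(2 * π))).add ((hc.1.pow 2).const_smul (lam * (2 * π)))
  · simp only [g0, hs.2 x, hc.2 x]

lemma g0_eq (lam : ℝ) : g0 lam = fun x =>
    Real.sin (2 * π * x) * deriv (fun x : ℝ => Real.cos (2 * π * x)) x
      + lam * deriv (fun x : ℝ => Real.sin (2 * π * x)) x * Real.cos (2 * π * x) := by
  funext x
  rw [(cos2pi_hasDeriv x).deriv, (sin2pi_hasDeriv x).deriv]
  simp only [g0]; ring

lemma integral_g0 (lam : ℝ) : ∫ x in (0:ℝ)..1, g0 lam x = π * (lam - 1) := by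
  have h2π : (2 * π : ℝ) ≠ 0 := by positivity
  have hsin : (∫ x in (0:ℝ)..1, Real.sin (2 * π * x) ^ 2) = 1 / 2 := by
    rw [intervalIntegral.integral_comp_mul_left (fun x => Real.sin x ^ 2) h2π]
    rw [integral_sin_sq]
    simp [Real.sin_two_pi, Real.cos_two_pi]
    field_simp
  have hcos : (∫ x in (0:ℝ)..1, Real.cos (2 * π * x) ^ 2) = 1 / 2 := by
    rw [intervalIntegral.integral_comp_mul_left (fun x => Real.cos x ^ 2) h2π]
    rw [integral_cos_sq]
    simp [Real.sin_two_pi, Real.cos_two_pi]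
    field_simp
  have hi1 : IntervalIntegrable (fun x => -(2 * π) * Real.sin (2 * π * x) ^ 2)
      MeasureTheory.volume 0 1 :=
    (Continuous.intervalIntegrable (by continuity) _ _)
  have hi2 : IntervalIntegrable (fun x => lam * (2 * π) * Real.cos (2 * π * x) ^ 2)
      MeasureTheory.volume 0 1 :=
    (Continuous.intervalIntegrable (by continuity) _ _)
  calc ∫ x in (0:ℝ)..1, g0 lam x
      = (∫ x in (0:ℝ)..1, -(2 * π) * Real.sin (2 * π * x) ^ 2)
        + ∫ x in (0:ℝ)..1, lam * (2 * π) * Real.cos (2 * π * x) ^ 2 :=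
        intervalIntegral.integral_add hi1 hi2
    _ = -(2 * π) * (1/2) + lam * (2 * π) * (1/2) := by
        rw [intervalIntegral.integral_const_mul, intervalIntegral.integral_const_mul, hsin, hcos]
    _ = π * (lam - 1) := by ring

/-- Antiderivative of a mean-zero smooth periodic function is smooth periodic. -/
lemma antideriv_mem {f : ℝ → ℝ} (hf : f ∈ smoothPeriodic)
    (h0 : (∫ x in (0:ℝ)..1, f x) = 0) :
    (fun x => ∫ t in (0:ℝ)..x, f t) ∈ smoothPeriodic ∧
      deriv (fun x => ∫ t in (0:ℝ)..x, f t) = f := by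
  have hcont : Continuous f := hf.1.continuous
  have hFd : ∀ x : ℝ, HasDerivAt (fun x => ∫ t in (0:ℝ)..x, f t) (f x) x :=
    fun x => (hcont.integral_hasStrictDerivAt 0 x).hasDerivAt
  have hderiv : deriv (fun x => ∫ t in (0:ℝ)..x, f t) = f :=
    funext fun x => (hFd x).deriv
  refine ⟨⟨?_, fun x => ?_⟩, hderiv⟩
  · rw [contDiff_infty_iff_deriv, hderiv]
    exact ⟨fun x => (hFd x).differentiableAt, hf.1⟩
  · have hsplit : (∫ t in (0:ℝ)..x, f t) + (∫ t in x..(x+1), f t)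
        = ∫ t in (0:ℝ)..(x+1), f t :=
      intervalIntegral.integral_add_adjacent_intervals
        (hcont.intervalIntegrable _ _) (hcont.intervalIntegrable _ _)
    have hper : (∫ t in x..(x+1), f t) = ∫ t in (0:ℝ)..(0+1), f t :=
      hf.2.intervalIntegral_add_eq x 0
    simp only at hsplit ⊢
    rw [← hsplit, hper]
    simp [h0]

end NoInvAux

open NoInvAux

/-- For `λ ≠ 1`, every linear functional on `λ`-densities on the circle that vanishes on
all Lie derivatives `L_X^λ φ = X·φ' + λ·X'·φ` is identically zero: there is no non-trivial
invariant linear functional on `λ`-densities for `λ ≠ 1`. -/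
theorem no_invariant_functional (lam : ℝ) (hlam : lam ≠ 1)
    (τ : smoothPeriodic →ₗ[ℝ] ℝ)
    (hτ : ∀ g X φ : smoothPeriodic,
      (g : ℝ → ℝ) = (fun x => (X : ℝ → ℝ) x * deriv (φ : ℝ → ℝ) x
        + lam * deriv (X : ℝ → ℝ) x * (φ : ℝ → ℝ) x) → τ g = 0) :
    τ = 0 := by
  -- the constant function 1
  set one : smoothPeriodic := ⟨fun _ => (1:ℝ), contDiff_const, fun _ => rfl⟩ with hone
  -- Step 1: τ vanishes on derivatives of periodic functions
  have key1 : ∀ (φ g : smoothPeriodic), (g : ℝ → ℝ) = deriv (φ : ℝ → ℝ) → τ g = 0 := by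
    intro φ g hg
    apply hτ g one φ
    rw [hg]
    funext x
    have h1 : deriv (fun _ : ℝ => (1:ℝ)) x = 0 := deriv_const x 1
    simp [hone, h1]
  -- Step 2: τ vanishes on mean-zero elements
  have key2 : ∀ f : smoothPeriodic, (∫ x in (0:ℝ)..1, (f : ℝ → ℝ) x) = 0 → τ f = 0 := by
    intro f h0
    obtain ⟨hFmem, hFderiv⟩ := antideriv_mem f.2 h0
    exact key1 ⟨_, hFmem⟩ f (by rw [hFderiv])
  -- Step 3: τ of the trig test element is zero
  set gel : smoothPeriodic := ⟨g0 lam, g0_mem lam⟩ with hgel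
  have key3 : τ gel = 0 := by
    refine hτ gel ⟨_, sin2pi_mem⟩ ⟨_, cos2pi_mem⟩ ?_
    exact g0_eq lam
  -- Conclusion
  have hπ : π * (lam - 1) ≠ 0 :=
    mul_ne_zero Real.pi_ne_zero (sub_ne_zero.mpr hlam)
  ext f
  set a : ℝ := (∫ x in (0:ℝ)..1, (f : ℝ → ℝ) x) / (π * (lam - 1)) with ha
  have hmean : (∫ x in (0:ℝ)..1, ((f - a • gel : smoothPeriodic) : ℝ → ℝ) x) = 0 := by
    have hfint : IntervalIntegrable (f : ℝ → ℝ) MeasureTheory.volume 0 1 :=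
      ((f.2.1.continuous).intervalIntegrable _ _)
    have hgint : IntervalIntegrable (fun x => a * g0 lam x) MeasureTheory.volume 0 1 :=
      ((((g0_mem lam).1.continuous).const_smul a).intervalIntegrable _ _)
    have hco : (((f - a • gel : smoothPeriodic) : ℝ → ℝ)) =
        fun x => (f : ℝ → ℝ) x - a * g0 lam x := by
      funext x
      simp [hgel]
    rw [hco, intervalIntegral.integral_sub hfint hgint,
      intervalIntegral.integral_const_mul, integral_g0]
    field_simp [ha]
    rw [ha, mul_assoc, div_mul_cancel₀ _ hπ, sub_self]
  have h1 : τ (f - a • gel) = 0 := key2 _ hmean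
  have h2 : τ f - a * τ gel = 0 := by
    rw [← h1]; simp [map_sub, map_smul, smul_eq_mul]
  rw [key3, mul_zero, sub_zero] at h2
  simpa using h2
end
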